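/- arXiv:1410.6921 — 8 statements merged into one kernel-verified Lean document; each statement's English description precedes it below -/
import Mathlib

section
/- Separation identity: let [·]: ℂ → ℂ be an odd function satisfying the Riemann relation. Then for all a, b, x, y ∈ ℂ with [a+x], [a-x], [a+y], [a-y], [a+b], [a-b] all nonzero, one has [x±y]/([a±x][a±y]) = [x±b]/([a±x][a±b]) - [y±b]/([a±y][a±b]). -/
/-- The paper's bracket `[u±v]`. -/
def plusMinus {G R : Type*} [AddCommGroup G] [Mul R] (f : G → R) (u v : G) : R :=
  f (u + v) * f (u - v)

section OddRiemann

variable {G R : Type*} [AddCommGroup G] [CommRing R] {f : G → R}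

theorem plusMinus_swap (hodd : ∀ u, f (-u) = -f u) (u v : G) :
    plusMinus f v u = -plusMinus f u v := by
  rw [plusMinus, plusMinus, add_comm, ← neg_sub, hodd, mul_neg]

/-- The separation identity with denominators cleared. -/
theorem plusMinus_separation_mul (hodd : ∀ u, f (-u) = -f u)
    (hR : ∀ x y u v : G, plusMinus f x u * plusMinus f y v - plusMinus f x v * plusMinus f y u =
      plusMinus f x y * plusMinus f u v)
    (a b x y : G) :
    plusMinus f x y * plusMinus f a b =
      plusMinus f x b * plusMinus f a y - plusMinus f y b * plusMinus f a x := by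
  have h := hR x y b a
  rw [plusMinus_swap hodd a y, plusMinus_swap hodd a x, plusMinus_swap hodd a b] at h
  linear_combination h

end OddRiemann

/-- Separation identity for an odd function satisfying the Riemann relation. -/
theorem separation_identity (f : ℂ → ℂ)
    (hodd : ∀ u : ℂ, f (-u) = -f u)
    (hR : ∀ x y u v : ℂ,
      f (x + u) * f (x - u) * (f (y + v) * f (y - v)) -
        f (x + v) * f (x - v) * (f (y + u) * f (y - u)) =
      f (x + y) * f (x - y) * (f (u + v) * f (u - v)))
    (a b x y : ℂ)
    (hax : f (a + x) ≠ 0) (hax' : f (a - x) ≠ 0)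
    (hay : f (a + y) ≠ 0) (hay' : f (a - y) ≠ 0)
    (hab : f (a + b) ≠ 0) (hab' : f (a - b) ≠ 0) :
    f (x + y) * f (x - y) / (f (a + x) * f (a - x) * (f (a + y) * f (a - y))) =
      f (x + b) * f (x - b) / (f (a + x) * f (a - x) * (f (a + b) * f (a - b))) -
        f (y + b) * f (y - b) / (f (a + y) * f (a - y) * (f (a + b) * f (a - b))) := by
  have key := plusMinus_separation_mul hodd hR a b x y
  simp only [plusMinus] at key
  field_simp
  linear_combination key
end

section
/- Elliptic partial fraction decomposition: let [·]: ℂ → ℂ be a nonzero entire odd function satisfying the Riemann relation, and let z, x₁, …, x_N, y₁, …, y_N be complex numbers such that the x_i are pairwise distinct modulo the zero set of [·] and z - x_i is not a zero of [·] for all i. Set c = Σ_{i=1}^N (x_i - y_i). Then [c] · ∏_{j=1}^N [z-y_j]/[z-x_j] = Σ_{i=1}^N ([z-x_i+c]/[z-x_i]) · (∏_{j=1}^N [x_i-y_j]) / (∏_{j≠i} [x_i-x_j]). -/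
/-!
With `X = (x₁, …, x_N, z)` and `Y = (y₁, …, y_N, z + c)` we have `∑ X = ∑ Y`, so
`w ↦ ∏ [w - Y] / ∏ [w - X]` behaves like an elliptic function, and the identity says that its
residues at the poles `X i` sum to zero. This vanishing is proved by induction on the number of
poles. Written at the midpoint of `p, q`, the Riemann relation becomes a three-term identity.
This identity expresses the residue sum for `Y = p :: q :: Y'` through two residue sums with one
pole fewer. In each of them `p, q` are merged into `p + q - X a` and the pole `X a` cancels.
This works as long as `[X a + X b - p - q] ≠ 0`. The degenerate case follows by moving
`p ↦ p + t`, `r ↦ r - t` and using that entire functions form an integral domain.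
-/

open Finset

def RiemannRelation {R : Type*} [CommRing R] (f : R → R) : Prop :=
  ∀ x y u v : R,
    f (x + u) * f (x - u) * (f (y + v) * f (y - v)) -
      f (x + v) * f (x - v) * (f (y + u) * f (y - u)) =
    f (x + y) * f (x - y) * (f (u + v) * f (u - v))

variable {ι : Type*} [DecidableEq ι]

section Field

variable {K : Type*} [Field K] {f : K → K}

theorem RiemannRelation.three_term [CharZero K] (hR : RiemannRelation f) (w a b p q : K) :
    f (a + b - (p + q)) * f (b - a) * (f (w - p) * f (w - q)) =
      f (w - (p + q - a)) * f (w - a) * (f (b - p) * f (b - q)) -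
        f (w - (p + q - b)) * f (w - b) * (f (a - p) * f (a - q)) := by
  have h := hR (w - (p + q) / 2) (b - (p + q) / 2) (a - (p + q) / 2) ((q - p) / 2)
  linear_combination (norm := ring_nf) -h

/-- Up to the factor `f' 0`, the sum of the residues of
`w ↦ ∏ v ∈ Y, f (w - v) / ∏ j ∈ s, f (w - X j)` at its poles `X i`. -/
def residueSum (f : K → K) (s : Finset ι) (X : ι → K) (Y : List K) : K :=
  ∑ i ∈ s, (Y.map fun v => f (X i - v)).prod / ∏ j ∈ s.erase i, f (X i - X j)

theorem residueSum_cons_cons [CharZero K] (hR : RiemannRelation f) (s : Finset ι) (X : ι → K)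
    (a b : ι) (p q : K) (Y : List K) :
    f (X a + X b - (p + q)) * f (X b - X a) * residueSum f s X (p :: q :: Y) =
      f (X b - p) * f (X b - q) * residueSum f s X (X a :: (p + q - X a) :: Y) -
        f (X a - p) * f (X a - q) * residueSum f s X (X b :: (p + q - X b) :: Y) := by
  simp only [residueSum, mul_sum, ← sum_sub_distrib, List.map_cons, List.prod_cons]
  refine sum_congr rfl fun i _ => ?_
  linear_combination ((Y.map fun v => f (X i - v)).prod / ∏ j ∈ s.erase i, f (X i - X j)) *
    hR.three_term (X i) (X a) (X b) p q

theorem residueSum_cons_self (h0 : f 0 = 0) {s : Finset ι} {X : ι → K} {a : ι} (ha : a ∈ s)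
    (hX : ∀ i ∈ s, i ≠ a → f (X i - X a) ≠ 0) (Y : List K) :
    residueSum f s X (X a :: Y) = residueSum f (s.erase a) X Y := by
  rw [residueSum, ← sum_erase s (a := a) (by simp [h0]), residueSum]
  refine sum_congr rfl fun i hi => ?_
  obtain ⟨hia, his⟩ := mem_erase.mp hi
  rw [← mul_prod_erase _ _ (mem_erase.mpr ⟨Ne.symm hia, ha⟩), erase_right_comm,
    List.map_cons, List.prod_cons, mul_div_mul_left _ _ (hX i his hia)]

theorem residueSum_pair (hodd : f.Odd) {X : ι → K} {a b : ι} (hab : a ≠ b) {p q : K}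
    (hsum : X a + X b = p + q) : residueSum f {a, b} X [p, q] = 0 := by
  have hneg (u v : K) (h : u = -v) : f u = -f v := h ▸ hodd v
  simp only [residueSum, sum_pair hab, List.map_cons, List.map_nil, List.prod_cons,
    List.prod_nil, mul_one, erase_insert_eq_erase, erase_insert_of_ne hab, erase_singleton,
    insert_empty_eq, mem_singleton, hab, not_false_eq_true, erase_eq_of_notMem, prod_singleton]
  rw [hneg (X b - p) (X a - q) (by linear_combination hsum),
    hneg (X b - q) (X a - p) (by linear_combination hsum), hneg (X b - X a) (X a - X b) (by ring)]
  ring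

theorem residueSum_eq_zero_of_erase [CharZero K] (hodd : f.Odd) (hR : RiemannRelation f)
    {s : Finset ι} {X : ι → K} (hX : ∀ i ∈ s, ∀ j ∈ s, i ≠ j → f (X i - X j) ≠ 0)
    {a b : ι} (ha : a ∈ s) (hb : b ∈ s) (hab : a ≠ b) {p q : K} {Y : List K}
    (hc : f (X a + X b - (p + q)) ≠ 0)
    (hA : residueSum f (s.erase a) X ((p + q - X a) :: Y) = 0)
    (hB : residueSum f (s.erase b) X ((p + q - X b) :: Y) = 0) :
    residueSum f s X (p :: q :: Y) = 0 := by
  have key := residueSum_cons_cons hR s X a b p q Y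
  rw [residueSum_cons_self hodd.map_zero ha (fun i hi hia => hX i hi a ha hia),
    residueSum_cons_self hodd.map_zero hb (fun i hi hib => hX i hi b hb hib), hA, hB] at key
  simpa [hc, hX b hb a ha hab.symm] using key

theorem residueSum_insert {s : Finset ι} {a : ι} (ha : a ∉ s) (X : ι → K) (Y : List K) :
    residueSum f (insert a s) X Y =
      (Y.map fun v => f (X a - v)).prod / ∏ j ∈ s, f (X a - X j) +
        ∑ i ∈ s, (Y.map fun v => f (X i - v)).prod /
          (f (X i - X a) * ∏ j ∈ s.erase i, f (X i - X j)) := by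
  rw [residueSum, sum_insert ha, erase_insert ha]
  congr 1
  refine sum_congr rfl fun i hi => ?_
  rw [erase_insert_of_ne (ne_of_mem_of_not_mem hi ha).symm,
    prod_insert (fun h => ha (mem_of_mem_erase h))]

theorem residueSum_insert_none (hodd : f.Odd) {N : ℕ} (z c : K) (x y : Fin N → K) :
    residueSum f (insert none ((univ : Finset (Fin N)).map .some)) (fun o => o.elim z x)
        ((z + c) :: List.ofFn y) =
      ∑ i, f (z - x i + c) / f (z - x i) *
          ((∏ j, f (x i - y j)) / ∏ j ∈ univ.erase i, f (x i - x j)) -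
        f c * ∏ j, f (z - y j) / f (z - x j) := by
  have hneg (u v : K) (h : u = -v) : f u = -f v := h ▸ hodd v
  rw [residueSum_insert (by simp), sum_map]
  simp only [← map_erase, prod_map]
  simp only [Option.elim_none, List.map_cons, sub_add_cancel_left, List.map_ofFn, List.prod_cons,
    List.prod_ofFn, Function.comp_apply, Function.Embedding.some_apply, Option.elim_some]
  rw [hodd c, prod_div_distrib, sub_eq_neg_add, neg_mul_eq_neg_mul, mul_div_assoc]
  congr 1
  refine sum_congr rfl fun i _ => ?_
  rw [hneg (x i - (z + c)) (z - x i + c) (by ring), hneg (x i - z) (z - x i) (by ring), neg_mul,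
    neg_mul, neg_div_neg_eq, mul_div_mul_comm]

end Field

theorem Differentiable.eq_zero_of_mul_eq_zero_of_ne_zero {F g : ℂ → ℂ} (hF : Differentiable ℂ F)
    (hg : Differentiable ℂ g) (hFg : F * g = 0) (hg0 : g ≠ 0) : F = 0 := by
  rcases AnalyticOnNhd.eq_zero_or_eq_zero_of_mul_eq_zero (fun t _ => hF.analyticAt t)
    (fun t _ => hg.analyticAt t) (fun t _ => congrFun hFg t) isPreconnected_univ with h | h
  · exact funext fun t => h t trivial
  · exact absurd (funext fun t => h t trivial) hg0

theorem residueSum_cons_cons_cons_eq_zero {f : ℂ → ℂ} (hne : f ≠ 0) (hent : Differentiable ℂ f)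
    (hodd : f.Odd) (hR : RiemannRelation f) {s : Finset ι} {X : ι → ℂ}
    (hX : ∀ i ∈ s, ∀ j ∈ s, i ≠ j → f (X i - X j) ≠ 0) {a b : ι} (ha : a ∈ s) (hb : b ∈ s)
    (hab : a ≠ b) {p q r : ℂ} {Y : List ℂ}
    (herase : ∀ d ∈ s, ∀ u v : ℂ, u + v = p + q + r - X d →
      residueSum f (s.erase d) X (u :: v :: Y) = 0) :
    residueSum f s X (p :: q :: r :: Y) = 0 := by
  set k := X a + X b - (p + q)
  set F : ℂ → ℂ := fun t => residueSum f s X ((p + t) :: q :: (r - t) :: Y) with hF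
  have hFd : Differentiable ℂ F := by
    simp only [hF, residueSum, List.map_cons, List.prod_cons]
    fun_prop
  have hFk : F * (fun t => f (k - t)) = 0 := by
    funext t
    by_cases ht : f (k - t) = 0
    · simp [ht]
    · have := residueSum_eq_zero_of_erase hodd hR hX ha hb hab (p := p + t) (q := q)
        (Y := (r - t) :: Y) (by convert ht using 2; ring)
        (herase a ha _ _ (by ring)) (herase b hb _ _ (by ring))
      simp [hF, this]
  have hF0 := hFd.eq_zero_of_mul_eq_zero_of_ne_zero (by fun_prop) hFk
    (fun h => hne (funext fun u => by simpa using congrFun h (k - u)))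
  simpa [hF] using congrFun hF0 0

theorem residueSum_eq_zero {f : ℂ → ℂ} (hne : f ≠ 0) (hent : Differentiable ℂ f)
    (hodd : f.Odd) (hR : RiemannRelation f) (X : ι → ℂ) (n : ℕ) :
    ∀ (s : Finset ι) (Y : List ℂ), s.card = n → Y.length = n →
      (∀ i ∈ s, ∀ j ∈ s, i ≠ j → f (X i - X j) ≠ 0) → ∑ i ∈ s, X i = Y.sum →
      residueSum f s X Y = 0 := by
  induction n with
  | zero => intro s Y hs; simp [residueSum, card_eq_zero.mp hs]
  | succ n ih =>
    intro s Y hs hY hX hsum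
    rcases Y with _ | ⟨p, _ | ⟨q, _ | ⟨r, Y⟩⟩⟩
    · simp at hY
    · obtain rfl : n = 0 := by simpa using hY.symm
      obtain ⟨a, rfl⟩ := card_eq_one.mp hs
      simp_all [residueSum, hodd.map_zero]
    · obtain rfl : n = 1 := by simpa using hY.symm
      obtain ⟨a, b, hab, rfl⟩ := card_eq_two.mp hs
      exact residueSum_pair hodd hab (by simpa [sum_pair hab] using hsum)
    · obtain ⟨a, ha, b, hb, hab⟩ := one_lt_card.mp (by simp at hY; omega : 1 < s.card)
      refine residueSum_cons_cons_cons_eq_zero hne hent hodd hR hX ha hb hab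
        fun d hd u v huv => ih _ _ (by rw [card_erase_of_mem hd, hs]; rfl)
          (by simp at hY ⊢; omega)
          (fun i hi j hj => hX i (mem_of_mem_erase hi) j (mem_of_mem_erase hj)) ?_
      rw [← add_sum_erase _ _ hd] at hsum
      simp only [List.sum_cons] at hsum ⊢
      linear_combination hsum - huv

/-- Elliptic partial fraction decomposition for a nonzero entire odd function
satisfying the Riemann relation. -/
theorem elliptic_partial_fraction (f : ℂ → ℂ)
    (hne : f ≠ 0) (hent : Differentiable ℂ f)
    (hodd : ∀ u : ℂ, f (-u) = -f u)
    (hR : ∀ x y u v : ℂ,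
      f (x + u) * f (x - u) * (f (y + v) * f (y - v)) -
        f (x + v) * f (x - v) * (f (y + u) * f (y - u)) =
      f (x + y) * f (x - y) * (f (u + v) * f (u - v)))
    (N : ℕ) (z : ℂ) (x y : Fin N → ℂ)
    (hx : ∀ i j : Fin N, i ≠ j → f (x i - x j) ≠ 0)
    (hz : ∀ i : Fin N, f (z - x i) ≠ 0)
    (c : ℂ) (hc : c = ∑ i, (x i - y i)) :
    f c * ∏ j, f (z - y j) / f (z - x j) =
      ∑ i, f (z - x i + c) / f (z - x i) *
        ((∏ j, f (x i - y j)) / ∏ j ∈ univ.erase i, f (x i - x j)) := by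
  have hdist : ∀ i ∈ insert none ((univ : Finset (Fin N)).map .some),
      ∀ j ∈ insert none ((univ : Finset (Fin N)).map .some), i ≠ j →
        f (i.elim z x - j.elim z x) ≠ 0 := by
    rintro (_ | i) - (_ | j) - hij
    · exact absurd rfl hij
    · exact hz j
    · rw [Option.elim_some, Option.elim_none, show x i - z = -(z - x i) by ring, hodd]
      exact neg_ne_zero.mpr (hz i)
    · exact hx i j (by simpa using hij)
  have key := residueSum_eq_zero hne hent hodd hR _ (N + 1) _ ((z + c) :: List.ofFn y)
    (by simp) (by simp) hdist (by simp [sum_map, List.sum_ofFn, hc, sum_sub_distrib]; ring)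
  rw [residueSum_insert_none hodd] at key
  exact (sub_eq_zero.mp key).symm
end

section
/- Elliptic Cauchy determinant: let [·]: ℂ → ℂ be an odd function satisfying the Riemann relation. For variables z = (z₁,…,z_N) and w = (w₁,…,w_N) with all [z_i ± w_j] nonzero, the determinant D(z|w) = det( 1/[z_i ± w_j] )_{i,j=1}^N equals (-1)^{N(N-1)/2} · (∏_{1≤i<j≤N} [z_i ± z_j][w_i ± w_j]) / (∏_{1≤i,j≤N} [z_i ± w_j]). -/
/-!
Induction on `N`, by one step of Gaussian elimination: the Schur complement of the `(0, 0)` entry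
of `(1 / g (z i) (w j))` is, by the three-term relation
`g x u * g y v - g x v * g y u = g x y * g u v` satisfied by `g a b = [a ± b]`, again a matrix of
the same shape in the remaining variables, rescaled by diagonal matrices on both sides.
The antisymmetry `g b a = -g a b` accounts for the sign.
-/

open Finset

namespace Matrix

variable {K : Type*} [Field K] {n : ℕ}

theorem det_succ_eq_mul_det_schur (M : Matrix (Fin (n + 1)) (Fin (n + 1)) K) (h : M 0 0 ≠ 0) :
    M.det = M 0 0 *
      det (of fun i j : Fin n => M i.succ j.succ - M i.succ 0 * M 0 j.succ / M 0 0) := by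
  set c : Fin (n + 1) → K := Fin.cons 0 fun i => -(M i.succ 0 / M 0 0)
  set B : Matrix (Fin (n + 1)) (Fin (n + 1)) K := of fun i j => M i j + c i * M 0 j
  have hB : B.det = M.det := det_eq_of_forall_row_eq_smul_add_const c 0 rfl fun _ _ => rfl
  have hcol : ∀ i : Fin n, B i.succ 0 = 0 := fun i => by
    simp only [B, c, of_apply, Fin.cons_succ, neg_mul]
    field_simp
    ring
  rw [← hB, det_succ_column_zero, Fin.sum_univ_succ]
  simp only [hcol, mul_zero, zero_mul, sum_const_zero, add_zero, Fin.succAbove_zero]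
  congr 1
  · simp [B, c]
  · congr 1
    ext i j
    simp only [B, c, submatrix_apply, of_apply, Fin.cons_succ, neg_mul]
    ring

end Matrix

theorem Fin.prod_prod_Ioi_succ {M : Type*} [CommMonoid M] {n : ℕ}
    (h : Fin (n + 1) → Fin (n + 1) → M) :
    ∏ i, ∏ j ∈ Ioi i, h i j =
      (∏ j : Fin n, h 0 j.succ) * ∏ i : Fin n, ∏ j ∈ Ioi i, h i.succ j.succ := by
  simp only [Fin.prod_univ_succ, Fin.prod_Ioi_zero, Fin.prod_Ioi_succ]

section ThreeTermRelation

variable {α K : Type*} [Field K] {g : α → α → K}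

theorem inv_sub_inv_mul_inv_div_inv_of_three_term
    (hrel : ∀ x y u v, g x u * g y v - g x v * g y u = g x y * g u v) {x y u v : α}
    (hxu : g x u ≠ 0) (hxv : g x v ≠ 0) (hyv : g y v ≠ 0) :
    (g x v)⁻¹ - (g x u)⁻¹ * (g y v)⁻¹ / (g y u)⁻¹ =
      g x y / g x u * (g u v / g y v * (g x v)⁻¹) := by
  field_simp
  linear_combination hrel x y u v

theorem cauchy_det_of_three_term (hanti : ∀ a b, g b a = -g a b)
    (hrel : ∀ x y u v, g x u * g y v - g x v * g y u = g x y * g u v)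
    (N : ℕ) (z w : Fin N → α) (hzw : ∀ i j, g (z i) (w j) ≠ 0) :
    Matrix.det (Matrix.of fun i j => (g (z i) (w j))⁻¹) =
      (-1) ^ (N * (N - 1) / 2) *
        ((∏ i, ∏ j ∈ Ioi i, g (z i) (z j) * g (w i) (w j)) /
          ∏ i, ∏ j, g (z i) (w j)) := by
  induction N with
  | zero => simp
  | succ n ih =>
    have hschur : Matrix.of (fun i j : Fin n =>
          (g (z i.succ) (w j.succ))⁻¹ -
            (g (z i.succ) (w 0))⁻¹ * (g (z 0) (w j.succ))⁻¹ / (g (z 0) (w 0))⁻¹) =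
        Matrix.diagonal (fun i => g (z i.succ) (z 0) / g (z i.succ) (w 0)) *
          Matrix.of (fun i j => (g (z i.succ) (w j.succ))⁻¹) *
          Matrix.diagonal (fun j => g (w 0) (w j.succ) / g (z 0) (w j.succ)) := by
      ext i j
      rw [Matrix.mul_diagonal, Matrix.diagonal_mul, Matrix.of_apply, Matrix.of_apply,
        inv_sub_inv_mul_inv_div_inv_of_three_term hrel (hzw _ _) (hzw _ _) (hzw _ _)]
      ring
    have hsign :
        ∏ i : Fin n, g (z i.succ) (z 0) = (-1) ^ n * ∏ i : Fin n, g (z 0) (z i.succ) := by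
      simp_rw [hanti (z 0)]
      rw [prod_neg, card_univ, Fintype.card_fin]
    rw [Matrix.det_succ_eq_mul_det_schur _ (inv_ne_zero (hzw 0 0))]
    simp only [Matrix.of_apply]
    rw [hschur, Matrix.det_mul, Matrix.det_mul, Matrix.det_diagonal, Matrix.det_diagonal,
      ih _ _ fun i j => hzw _ _, prod_div_distrib, prod_div_distrib, hsign, Nat.triangle_succ,
      pow_add, Fin.prod_prod_Ioi_succ (fun i j => g (z i) (z j) * g (w i) (w j))]
    simp only [Fin.prod_univ_succ, prod_mul_distrib]
    field_simp

end ThreeTermRelation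

/-- The elliptic Cauchy determinant (Frobenius-type) for an odd function
satisfying the Riemann relation. -/
theorem elliptic_cauchy_determinant (f : ℂ → ℂ)
    (hodd : ∀ u : ℂ, f (-u) = -f u)
    (hR : ∀ x y u v : ℂ,
      f (x + u) * f (x - u) * (f (y + v) * f (y - v)) -
        f (x + v) * f (x - v) * (f (y + u) * f (y - u)) =
      f (x + y) * f (x - y) * (f (u + v) * f (u - v)))
    (N : ℕ) (z w : Fin N → ℂ)
    (hzw : ∀ i j : Fin N, f (z i + w j) * f (z i - w j) ≠ 0) :
    Matrix.det (Matrix.of fun i j : Fin N => (f (z i + w j) * f (z i - w j))⁻¹) =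
      (-1 : ℂ) ^ (N * (N - 1) / 2) *
        ((∏ i, ∏ j ∈ Ioi i, f (z i + z j) * f (z i - z j) *
            (f (w i + w j) * f (w i - w j))) /
          ∏ i, ∏ j, f (z i + w j) * f (z i - w j)) := by
  refine cauchy_det_of_three_term (g := fun a b => f (a + b) * f (a - b)) (fun a b => ?_)
    hR N z w hzw
  rw [add_comm b a, ← neg_sub a b, hodd, mul_neg]
end

section
/- Type C₁ theta identity (Frenkel–Turaev N=1 / constancy of R(x;a)·1): let [·] be an odd function satisfying the Riemann relation, and let a₀, a₁, a₂, a₃ ∈ ℂ satisfy a₀+a₁+a₂+a₃ = 0. Then for all x with [2x] ≠ 0, (∏_{p=0}^3 [x+a_p] - ∏_{p=0}^3 [x-a_p]) / [2x] = [a₀+a₁][a₀+a₂][a₀+a₃]. -/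
open Finset

/-- Type `C₁` theta identity: constancy of `R(x;a)·1` under the balancing
condition `a₀+a₁+a₂+a₃ = 0`. -/
theorem C1_theta_identity (f : ℂ → ℂ) (hne : f ≠ 0)
    (hodd : ∀ u : ℂ, f (-u) = -f u)
    (hR : ∀ x y u v : ℂ,
      f (x + u) * f (x - u) * (f (y + v) * f (y - v)) -
        f (x + v) * f (x - v) * (f (y + u) * f (y - u)) =
      f (x + y) * f (x - y) * (f (u + v) * f (u - v)))
    (a : Fin 4 → ℂ) (hbal : a 0 + a 1 + a 2 + a 3 = 0)
    (x : ℂ) (hx : f (2 * x) ≠ 0) :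
    ((∏ p, f (x + a p)) - ∏ p, f (x - a p)) / f (2 * x) =
      f (a 0 + a 1) * f (a 0 + a 2) * f (a 0 + a 3) := by
  have ha3 : a 3 = -(a 0 + a 1 + a 2) := by linear_combination hbal
  have key := hR (x + (a 0 + a 1)/2) (x - (a 0 + a 1)/2) ((a 0 - a 1)/2) ((a 2 - a 3)/2)
  have e1 : x + (a 0 + a 1)/2 + (a 0 - a 1)/2 = x + a 0 := by ring
  have e2 : x + (a 0 + a 1)/2 - (a 0 - a 1)/2 = x + a 1 := by ring
  have e3 : x - (a 0 + a 1)/2 + (a 2 - a 3)/2 = x + a 2 := by rw [ha3]; ring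
  have e4 : x - (a 0 + a 1)/2 - (a 2 - a 3)/2 = x + a 3 := by rw [ha3]; ring
  have e5 : x + (a 0 + a 1)/2 + (a 2 - a 3)/2 = x - a 3 := by rw [ha3]; ring
  have e6 : x + (a 0 + a 1)/2 - (a 2 - a 3)/2 = x - a 2 := by rw [ha3]; ring
  have e7 : x - (a 0 + a 1)/2 + (a 0 - a 1)/2 = x - a 1 := by ring
  have e8 : x - (a 0 + a 1)/2 - (a 0 - a 1)/2 = x - a 0 := by ring
  have e9 : x + (a 0 + a 1)/2 + (x - (a 0 + a 1)/2) = 2 * x := by ring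
  have e10 : x + (a 0 + a 1)/2 - (x - (a 0 + a 1)/2) = a 0 + a 1 := by ring
  have e11 : (a 0 - a 1)/2 + (a 2 - a 3)/2 = a 0 + a 2 := by rw [ha3]; ring
  have e12 : (a 0 - a 1)/2 - (a 2 - a 3)/2 = a 0 + a 3 := by rw [ha3]; ring
  rw [e1, e2, e3, e4, e5, e6, e7, e8, e9, e10, e11, e12] at key
  rw [Fin.prod_univ_four, Fin.prod_univ_four, div_eq_iff hx]
  linear_combination key
end

section
/- Let [·] be an odd function satisfying the Riemann relation, δ ∈ ℂ, m ≥ 1, x₁,…,x_m ∈ ℂ and μ₁,…,μ_m ∈ ℕ. Define the shifted factorial [u]_k = [u][u+δ]⋯[u+(k-1)δ]. Then, assuming all factors involved are nonzero, ∏_{1 ≤ i ≠ j ≤ m} [x_i - x_j - μ_j δ]_{μ_i} / [x_i - x_j + δ]_{μ_i} = ∏_{1 ≤ i < j ≤ m} [x_i - x_j] / [(x_i + μ_i δ) - (x_j + μ_j δ)]. -/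
open Finset

/-- The shifted factorial `[u]_k = [u][u+δ]⋯[u+(k-1)δ]`. -/
noncomputable def shiftedFac (f : ℂ → ℂ) (δ : ℂ) (u : ℂ) (k : ℕ) : ℂ :=
  ∏ r ∈ Finset.range k, f (u + (r : ℂ) * δ)

/-!
Grouping the factors for `(i, j)` and `(j, i)`, it suffices to treat one pair, with
`d = x_i - x_j`, `a = μ_i`, `b = μ_j`. Oddness of `[·]` reflects `[-u]_k = (-1)^k [u - (k-1)δ]_k`,
which turns the `(j, i)` factor into `[d + (a-b+1)δ]_b / [d - bδ]_b`. Both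
`[d - bδ]_a [d + (a-b)δ] [d + (a-b+1)δ]_b` and `[d - bδ]_b [d] [d + δ]_a` are then the same
shifted factorial `[d - bδ]_{a+b+1}`, which gives `[d] / [d + (a-b)δ]`.
-/

theorem Finset.prod_prod_erase_eq_prod_prod_Ioi_mul {ι M : Type*} [CommMonoid M] [Fintype ι]
    [LinearOrder ι] [LocallyFiniteOrderTop ι] [LocallyFiniteOrderBot ι] (g : ι → ι → M) :
    ∏ i, ∏ j ∈ univ.erase i, g i j = ∏ i, ∏ j ∈ Ioi i, g i j * g j i := by
  have hIio : ∏ i, ∏ j ∈ Iio i, g i j = ∏ i, ∏ j ∈ Ioi i, g j i :=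
    prod_comm' fun i j => by simp
  calc ∏ i, ∏ j ∈ univ.erase i, g i j
      = ∏ i, ((∏ j ∈ Ioi i, g i j) * ∏ j ∈ Iio i, g i j) := by
        refine prod_congr rfl fun i _ => ?_
        rw [← compl_singleton, ← Ioi_disjUnion_Iio, prod_disjUnion]
    _ = ∏ i, ∏ j ∈ Ioi i, g i j * g j i := by
        rw [prod_mul_distrib, hIio, ← prod_mul_distrib]
        exact prod_congr rfl fun i _ => prod_mul_distrib.symm

section ShiftedFac

variable (f : ℂ → ℂ) (δ : ℂ)

theorem shiftedFac_add (u : ℂ) (a b : ℕ) :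
    shiftedFac f δ u (a + b) = shiftedFac f δ u a * shiftedFac f δ (u + a * δ) b := by
  simp only [shiftedFac, prod_range_add, Nat.cast_add]
  congr 1
  refine prod_congr rfl fun r _ => ?_
  ring_nf

theorem shiftedFac_succ_add (u : ℂ) (a b : ℕ) :
    shiftedFac f δ u (a + 1 + b) =
      shiftedFac f δ u a * f (u + a * δ) * shiftedFac f δ (u + (a + 1) * δ) b := by
  rw [shiftedFac_add, shiftedFac, prod_range_succ]
  push_cast
  rfl

theorem shiftedFac_ne_zero {u : ℂ} {k : ℕ} (h : ∀ r < k, f (u + r * δ) ≠ 0) :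
    shiftedFac f δ u k ≠ 0 :=
  prod_ne_zero_iff.2 fun r hr => h r (mem_range.1 hr)

variable {f}

theorem shiftedFac_neg (hodd : ∀ u, f (-u) = -f u) (u : ℂ) (k : ℕ) :
    shiftedFac f δ (-u) k = (-1) ^ k * shiftedFac f δ (u - (k - 1) * δ) k := by
  rw [shiftedFac, shiftedFac, ← prod_range_reflect _ k]
  calc ∏ r ∈ range k, f (-u + (k - 1 - r : ℕ) * δ)
      = ∏ r ∈ range k, -f (u - (k - 1) * δ + r * δ) := by
        refine prod_congr rfl fun r hr => ?_
        have hr : r + 1 ≤ k := mem_range.1 hr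
        rw [← hodd, Nat.cast_sub (by omega), Nat.cast_sub (by omega : 1 ≤ k)]
        push_cast
        ring_nf
    _ = _ := by rw [prod_neg, card_range]

theorem shiftedFac_ratio_mul_shiftedFac_ratio_swap (hodd : ∀ u, f (-u) = -f u) (y z : ℂ)
    (a b : ℕ) (hB : shiftedFac f δ (y - z + δ) a ≠ 0) (hD : shiftedFac f δ (z - y + δ) b ≠ 0)
    (hQ : f ((y + a * δ) - (z + b * δ)) ≠ 0) :
    shiftedFac f δ (y - z - b * δ) a / shiftedFac f δ (y - z + δ) a *
      (shiftedFac f δ (z - y - a * δ) b / shiftedFac f δ (z - y + δ) b) =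
    f (y - z) / f ((y + a * δ) - (z + b * δ)) := by
  set d := y - z
  have hC : shiftedFac f δ (z - y - a * δ) b
      = (-1) ^ b * shiftedFac f δ (d + (a - b + 1) * δ) b := by
    rw [show z - y - a * δ = -(d + a * δ) by ring, shiftedFac_neg δ hodd]
    ring_nf
  have hD' : shiftedFac f δ (z - y + δ) b = (-1) ^ b * shiftedFac f δ (d - b * δ) b := by
    rw [show z - y + δ = -(d - δ) by ring, shiftedFac_neg δ hodd]
    ring_nf
  have hQ' : (y + a * δ) - (z + b * δ) = d + (a - b) * δ := by ring
  -- both sides are `[d - bδ]_{a+b+1}`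
  have key : shiftedFac f δ (d - b * δ) a * f (d + (a - b) * δ) *
        shiftedFac f δ (d + (a - b + 1) * δ) b =
      shiftedFac f δ (d - b * δ) b * f d * shiftedFac f δ (d + δ) a := by
    have h := shiftedFac_succ_add f δ (d - b * δ) a b
    rw [show a + 1 + b = b + 1 + a by omega, shiftedFac_succ_add] at h
    convert h.symm using 3 <;> ring_nf
  rw [hQ', hC, hD', mul_div_mul_left _ _ (pow_ne_zero _ (neg_ne_zero.2 one_ne_zero)),
    div_mul_div_comm, div_eq_div_iff (mul_ne_zero hB (right_ne_zero_of_mul (hD' ▸ hD)))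
      (hQ' ▸ hQ)]
  linear_combination key

end ShiftedFac

theorem principal_specialization_product_general (f : ℂ → ℂ)
    (hodd : ∀ u : ℂ, f (-u) = -f u)
    (δ : ℂ) (m : ℕ) (x : Fin m → ℂ) (μ : Fin m → ℕ)
    (hne2 : ∀ i j : Fin m, i ≠ j → ∀ r : ℕ, r < μ i →
      f (x i - x j + δ + (r : ℂ) * δ) ≠ 0)
    (hne3 : ∀ i j : Fin m, i ≠ j →
      f ((x i + (μ i : ℂ) * δ) - (x j + (μ j : ℂ) * δ)) ≠ 0) :
    (∏ i, ∏ j ∈ univ.erase i,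
        shiftedFac f δ (x i - x j - (μ j : ℂ) * δ) (μ i) /
          shiftedFac f δ (x i - x j + δ) (μ i)) =
      ∏ i, ∏ j ∈ Ioi i,
        f (x i - x j) / f ((x i + (μ i : ℂ) * δ) - (x j + (μ j : ℂ) * δ)) := by
  rw [prod_prod_erase_eq_prod_prod_Ioi_mul]
  refine prod_congr rfl fun i _ => prod_congr rfl fun j hj => ?_
  have hij : i ≠ j := (mem_Ioi.1 hj).ne
  exact shiftedFac_ratio_mul_shiftedFac_ratio_swap δ hodd (x i) (x j) (μ i) (μ j)
    (shiftedFac_ne_zero f δ (hne2 i j hij)) (shiftedFac_ne_zero f δ (hne2 j i hij.symm))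
    (hne3 i j hij)

/-- Product identity used in the multiple principal specialization:
`∏_{i≠j} [x_i-x_j-μ_jδ]_{μ_i} / [x_i-x_j+δ]_{μ_i}
  = ∏_{i<j} [x_i-x_j] / [(x_i+μ_iδ)-(x_j+μ_jδ)]`. -/
theorem principal_specialization_product (f : ℂ → ℂ)
    (hodd : ∀ u : ℂ, f (-u) = -f u)
    (hR : ∀ x y u v : ℂ,
      f (x + u) * f (x - u) * (f (y + v) * f (y - v)) -
        f (x + v) * f (x - v) * (f (y + u) * f (y - u)) =
      f (x + y) * f (x - y) * (f (u + v) * f (u - v)))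
    (δ : ℂ) (m : ℕ) (hm : 1 ≤ m) (x : Fin m → ℂ) (μ : Fin m → ℕ)
    (hne1 : ∀ i j : Fin m, i ≠ j → ∀ r : ℕ, r < μ i →
      f (x i - x j - (μ j : ℂ) * δ + (r : ℂ) * δ) ≠ 0)
    (hne2 : ∀ i j : Fin m, i ≠ j → ∀ r : ℕ, r < μ i →
      f (x i - x j + δ + (r : ℂ) * δ) ≠ 0)
    (hne3 : ∀ i j : Fin m, i ≠ j →
      f ((x i + (μ i : ℂ) * δ) - (x j + (μ j : ℂ) * δ)) ≠ 0)
    (hne4 : ∀ i j : Fin m, i ≠ j → f (x i - x j) ≠ 0) :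
    (∏ i, ∏ j ∈ univ.erase i,
        shiftedFac f δ (x i - x j - (μ j : ℂ) * δ) (μ i) /
          shiftedFac f δ (x i - x j + δ) (μ i)) =
      ∏ i, ∏ j ∈ Ioi i,
        f (x i - x j) / f ((x i + (μ i : ℂ) * δ) - (x j + (μ j : ℂ) * δ)) :=
  principal_specialization_product_general f hodd δ m x μ hne2 hne3
end

section
/- Shifted factorial balancing identity: let [·] be any function ℂ → ℂ and δ ∈ ℂ, with [u]_k := ∏_{r=0}^{k-1}[u + rδ]. Let M ≥ N ≥ 0 be integers and a₀, a₁, a₂, a₃ ∈ ℂ with a₀+a₁+a₂+a₃ = (N-M+1)δ, and set b_p = δ/2 - a_p. Assume [·] is odd and all relevant factors are nonzero. Then ∏_{p=1}^3 [a₀+a_p]_{M-N} = (∏_{p=1}^3 [a₀+a_p]_M) / (∏_{1≤p<q≤3} [b_p+b_q]_N). -/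
open Finset

lemma shiftedFac_split (f : ℂ → ℂ) (δ : ℂ) (M N : ℕ) (hMN : N ≤ M) (u v : ℂ)
    (hv : v = u + ((M : ℂ) - (N : ℂ)) * δ) :
    shiftedFac f δ u M = shiftedFac f δ u (M - N) * shiftedFac f δ v N := by
  unfold shiftedFac
  rw [show M = (M - N) + N from (Nat.sub_add_cancel hMN).symm, Finset.prod_range_add]
  congr 1
  · rw [Nat.add_sub_cancel]
  · apply Finset.prod_congr rfl
    intro r _
    congr 1
    have : ((M - N : ℕ) : ℂ) = (M : ℂ) - (N : ℂ) := by
      push_cast [hMN]; ring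
    push_cast
    rw [this, hv]; ring

/-- Shifted factorial balancing identity:
`∏_{p=1}^3 [a₀+a_p]_{M-N} = ∏_{p=1}^3 [a₀+a_p]_M / ∏_{1≤p<q≤3} [b_p+b_q]_N`
under the balancing condition `a₀+a₁+a₂+a₃ = (N-M+1)δ`, `b_p = δ/2 - a p`. -/
theorem shifted_factorial_balancing (f : ℂ → ℂ)
    (hodd : ∀ u : ℂ, f (-u) = -f u)
    (δ : ℂ) (M N : ℕ) (hMN : N ≤ M)
    (a b : Fin 4 → ℂ)
    (hbal : a 0 + a 1 + a 2 + a 3 = ((N : ℂ) - (M : ℂ) + 1) * δ)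
    (hb : ∀ p, b p = δ / 2 - a p)
    (h12 : ∀ r : ℕ, r < N → f (b 1 + b 2 + (r : ℂ) * δ) ≠ 0)
    (h13 : ∀ r : ℕ, r < N → f (b 1 + b 3 + (r : ℂ) * δ) ≠ 0)
    (h23 : ∀ r : ℕ, r < N → f (b 2 + b 3 + (r : ℂ) * δ) ≠ 0) :
    shiftedFac f δ (a 0 + a 1) (M - N) * shiftedFac f δ (a 0 + a 2) (M - N) *
        shiftedFac f δ (a 0 + a 3) (M - N) =
      shiftedFac f δ (a 0 + a 1) M * shiftedFac f δ (a 0 + a 2) M *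
          shiftedFac f δ (a 0 + a 3) M /
        (shiftedFac f δ (b 1 + b 2) N * shiftedFac f δ (b 1 + b 3) N *
          shiftedFac f δ (b 2 + b 3) N) := by
  have e1 : shiftedFac f δ (a 0 + a 1) M
      = shiftedFac f δ (a 0 + a 1) (M - N) * shiftedFac f δ (b 2 + b 3) N := by
    apply shiftedFac_split f δ M N hMN
    rw [hb 2, hb 3]; linear_combination -hbal
  have e2 : shiftedFac f δ (a 0 + a 2) M
      = shiftedFac f δ (a 0 + a 2) (M - N) * shiftedFac f δ (b 1 + b 3) N := by
    apply shiftedFac_split f δ M N hMN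
    rw [hb 1, hb 3]; linear_combination -hbal
  have e3 : shiftedFac f δ (a 0 + a 3) M
      = shiftedFac f δ (a 0 + a 3) (M - N) * shiftedFac f δ (b 1 + b 2) N := by
    apply shiftedFac_split f δ M N hMN
    rw [hb 1, hb 2]; linear_combination -hbal
  have n12 : shiftedFac f δ (b 1 + b 2) N ≠ 0 :=
    Finset.prod_ne_zero_iff.mpr fun r hr => h12 r (Finset.mem_range.mp hr)
  have n13 : shiftedFac f δ (b 1 + b 3) N ≠ 0 :=
    Finset.prod_ne_zero_iff.mpr fun r hr => h13 r (Finset.mem_range.mp hr)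
  have n23 : shiftedFac f δ (b 2 + b 3) N ≠ 0 :=
    Finset.prod_ne_zero_iff.mpr fun r hr => h23 r (Finset.mem_range.mp hr)
  rw [e1, e2, e3]
  field_simp
end

section
/- BC₁ A⁰ parameter-shift identity: let [·] be an odd function satisfying the Riemann relation, δ ∈ ℂ*, ω_r ∈ ℂ, and a = (a₀,…,a₇) ∈ ℂ⁸. Define A⁰_r(x; a|c) = κ · [x±c] ∏_{p=0}^7 [½(ω_r - δ) + a_p] / (2 [½(ω_r-δ) ± x][½(ω_r-δ) ± c]) where the constant κ depends only on r and the parameters but not on x or c. Then for any c, c' (with denominators nonzero): A⁰_r(x; a|c) - A⁰_r(x; a|c') = A⁰_r(c'; a|c). -/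
open Finset

/-- The `BC₁` zero-shift coefficient
`A⁰_r(x;a|c) = κ · [x±c] ∏_p [½(ω_r-δ)+a_p] / (2[½(ω_r-δ)±x][½(ω_r-δ)±c])`,
where `κ` does not depend on `x` or `c`. -/
noncomputable def A0coef (f : ℂ → ℂ) (κ δ ω : ℂ) (a : Fin 8 → ℂ) (x c : ℂ) : ℂ :=
  κ * (f (x + c) * f (x - c)) * (∏ p, f ((ω - δ) / 2 + a p)) /
    (2 * (f ((ω - δ) / 2 + x) * f ((ω - δ) / 2 - x)) *
      (f ((ω - δ) / 2 + c) * f ((ω - δ) / 2 - c)))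

/-! The difference `A⁰(x|c) - A⁰(x|c')` has, after clearing the common factor `[h±x]`
(`h = ½(ω - δ)`), the numerator `[x±c][h±c'] - [x±c'][h±c]`; the Riemann relation at
`(x, h, c, c')` together with oddness turns it into `[h±x][c'±c]`, which cancels `[h±x]`
and leaves exactly `A⁰(c'|c)`. -/

section Riemann

variable {G R : Type*} [AddCommGroup G] [CommRing R] {f : G → R}

theorem riemann_relation_separation (hodd : ∀ u, f (-u) = -f u)
    (hR : ∀ x y u v : G,
      f (x + u) * f (x - u) * (f (y + v) * f (y - v)) -
        f (x + v) * f (x - v) * (f (y + u) * f (y - u)) =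
      f (x + y) * f (x - y) * (f (u + v) * f (u - v)))
    (h x c c' : G) :
    f (x + c) * f (x - c) * (f (h + c') * f (h - c')) -
        f (x + c') * f (x - c') * (f (h + c) * f (h - c)) =
      f (h + x) * f (h - x) * (f (c' + c) * f (c' - c)) := by
  have hxh : f (x - h) = -f (h - x) := by rw [← neg_sub, hodd]
  have hcc' : f (c - c') = -f (c' - c) := by rw [← neg_sub, hodd]
  rw [hR x h c c', add_comm x h, add_comm c c', hxh, hcc']
  ring

end Riemann

theorem riemann_relation_separation_div {f : ℂ → ℂ} (hodd : ∀ u, f (-u) = -f u)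
    (hR : ∀ x y u v : ℂ,
      f (x + u) * f (x - u) * (f (y + v) * f (y - v)) -
        f (x + v) * f (x - v) * (f (y + u) * f (y - u)) =
      f (x + y) * f (x - y) * (f (u + v) * f (u - v)))
    {h x c c' : ℂ} (hx1 : f (h + x) ≠ 0) (hx2 : f (h - x) ≠ 0)
    (hc1 : f (h + c) ≠ 0) (hc2 : f (h - c) ≠ 0)
    (hc'1 : f (h + c') ≠ 0) (hc'2 : f (h - c') ≠ 0) :
    f (x + c) * f (x - c) / (f (h + x) * f (h - x) * (f (h + c) * f (h - c))) -
        f (x + c') * f (x - c') / (f (h + x) * f (h - x) * (f (h + c') * f (h - c'))) =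
      f (c' + c) * f (c' - c) / (f (h + c') * f (h - c') * (f (h + c) * f (h - c))) := by
  rw [div_sub_div _ _ (by positivity) (by positivity), div_eq_div_iff (by positivity) (by positivity)]
  linear_combination f (h + x) * f (h - x) * (f (h + c') * f (h - c') * (f (h + c) * f (h - c))) *
    riemann_relation_separation hodd hR h x c c'

theorem A0coef_eq_mul_div (f : ℂ → ℂ) (κ δ ω : ℂ) (a : Fin 8 → ℂ) (x c : ℂ) :
    A0coef f κ δ ω a x c = κ * (∏ p, f ((ω - δ) / 2 + a p)) / 2 *
      (f (x + c) * f (x - c) / (f ((ω - δ) / 2 + x) * f ((ω - δ) / 2 - x) *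
        (f ((ω - δ) / 2 + c) * f ((ω - δ) / 2 - c)))) := by
  unfold A0coef
  ring

theorem A0_parameter_shift_general (f : ℂ → ℂ)
    (hodd : ∀ u : ℂ, f (-u) = -f u)
    (hR : ∀ x y u v : ℂ,
      f (x + u) * f (x - u) * (f (y + v) * f (y - v)) -
        f (x + v) * f (x - v) * (f (y + u) * f (y - u)) =
      f (x + y) * f (x - y) * (f (u + v) * f (u - v)))
    (κ δ ω : ℂ) (a : Fin 8 → ℂ) (x c c' : ℂ)
    (hx1 : f ((ω - δ) / 2 + x) ≠ 0) (hx2 : f ((ω - δ) / 2 - x) ≠ 0)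
    (hc1 : f ((ω - δ) / 2 + c) ≠ 0) (hc2 : f ((ω - δ) / 2 - c) ≠ 0)
    (hc'1 : f ((ω - δ) / 2 + c') ≠ 0) (hc'2 : f ((ω - δ) / 2 - c') ≠ 0) :
    A0coef f κ δ ω a x c - A0coef f κ δ ω a x c' = A0coef f κ δ ω a c' c := by
  simp only [A0coef_eq_mul_div, ← mul_sub]
  rw [riemann_relation_separation_div hodd hR hx1 hx2 hc1 hc2 hc'1 hc'2]

/-- `BC₁` parameter-shift identity:
`A⁰_r(x;a|c) - A⁰_r(x;a|c') = A⁰_r(c';a|c)`. -/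
theorem A0_parameter_shift (f : ℂ → ℂ)
    (hodd : ∀ u : ℂ, f (-u) = -f u)
    (hR : ∀ x y u v : ℂ,
      f (x + u) * f (x - u) * (f (y + v) * f (y - v)) -
        f (x + v) * f (x - v) * (f (y + u) * f (y - u)) =
      f (x + y) * f (x - y) * (f (u + v) * f (u - v)))
    (κ δ ω : ℂ) (hδ : δ ≠ 0) (a : Fin 8 → ℂ) (x c c' : ℂ)
    (hx1 : f ((ω - δ) / 2 + x) ≠ 0) (hx2 : f ((ω - δ) / 2 - x) ≠ 0)
    (hc1 : f ((ω - δ) / 2 + c) ≠ 0) (hc2 : f ((ω - δ) / 2 - c) ≠ 0)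
    (hc'1 : f ((ω - δ) / 2 + c') ≠ 0) (hc'2 : f ((ω - δ) / 2 - c') ≠ 0) :
    A0coef f κ δ ω a x c - A0coef f κ δ ω a x c' = A0coef f κ δ ω a c' c :=
  A0_parameter_shift_general f hodd hR κ δ ω a x c c' hx1 hx2 hc1 hc2 hc'1 hc'2
end

section
/- Elliptic Bailey-type general identity (Lemma on partial fractions): let [·] be a nonzero entire odd function satisfying the Riemann relation, δ ∈ ℂ*, m ≥ 1. Let a₀,…,a_{m+3} and d₀,…,d_{m-1} be complex parameters with Σ_p a_p - Σ_r d_r = 2δ and the d_r pairwise distinct modulo the zero set of [·]. Set b_p = δ - a_p and e_r = δ - d_r. Then for generic x, y: ∏_p[x+a_p]/([2x]∏_r[x+d_r]) · [x±y]/[(x+δ)±y] + ∏_p[-x+a_p]/([-2x]∏_r[-x+d_r]) · [x±y]/[(x-δ)±y] + ∏_p[y+b_p]/([2y]∏_r[y+e_r]) · [x±y]/[x±(y+δ)] + ∏_p[-y+b_p]/([-2y]∏_r[-y+e_r]) · [x±y]/[x±(y-δ)] + Σ_{r=0}^{m-1} (∏_p[a_p-d_r] / ∏_{r'≠r}[d_{r'}-d_r])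 · [x±y]/([-d_r±x][-e_r±y]) = 0. -/
/-!
Write `[u]` for `f u` and let `F z = ∏_j [z - B_j] / ∏_j [z - A_j]`, with zeros `B_p = δ/2 - a_p`
and poles `A = (δ/2 - d_r, δ/2 ± x, -δ/2 ± y)`. Each of the `m + 4` terms is `[x + y][x - y]` times
a coefficient `∏_j [A_k - B_j] / ∏_{j ≠ k} [A_k - A_j]`, the residue of `F` at `A_k` up to the
factor `[·]'(0)`, and the balancing condition says `∑ A = ∑ B`. Under that condition these
coefficients always sum to zero.

This is proved by induction on the number of poles. The three-term form of the Riemann relation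
writes `[z - B₀][z - B₁]` as a combination of two products, in each of which one zero equals one
of the poles `A₀`, `A₁`; such a pair cancels, leaving two instances with one pole fewer. The split
needs `[B₀ + B₁ - A₀ - A₁] ≠ 0`. Otherwise move `B₀` and `B₂` in opposite directions by `t`: the
sum is continuous in `t` and vanishes off the zero set of `[·]`, which is discrete because `[·]`
is a nonzero entire function.
-/

open Finset

def SatisfiesRiemannRelation (f : ℂ → ℂ) : Prop :=
  ∀ x y u v : ℂ,
    f (x + u) * f (x - u) * (f (y + v) * f (y - v)) -
      f (x + v) * f (x - v) * (f (y + u) * f (y - u)) =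
    f (x + y) * f (x - y) * (f (u + v) * f (u - v))

theorem SatisfiesRiemannRelation.three_term {f : ℂ → ℂ} (hR : SatisfiesRiemannRelation f)
    (z p p' q q' : ℂ) :
    f (q + q' - p - p') * f (p' - p) * (f (z - q) * f (z - q')) =
      f (q' - p) * f (q - p) * (f (z - p') * f (z - (q + q' - p'))) +
      f (q' - p') * f (p' - q) * (f (z - p) * f (z - (q + q' - p))) := by
  have h := hR (z - (q + q') / 2) ((q + q') / 2 - p) ((q' - q) / 2) ((q + q') / 2 - p')
  ring_nf at h ⊢
  linear_combination h

theorem Fin.prod_erase_succAbove {M : Type*} [CommMonoid M] {n : ℕ} (l : Fin (n + 1)) (i : Fin n)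
    (g : Fin (n + 1) → M) :
    ∏ j ∈ univ.erase (l.succAbove i), g j = g l * ∏ j ∈ univ.erase i, g (l.succAbove j) := by
  simp only [← filter_ne', prod_filter, Fin.prod_univ_succAbove _ l, ne_eq,
    (Fin.succAbove_ne l i).symm, not_false_eq_true, if_true, Fin.succAbove_right_inj]

theorem Fin.prod_erase_castAdd {M : Type*} [CommMonoid M] {m n : ℕ} (r : Fin m)
    (g : Fin (m + n) → M) :
    ∏ j ∈ univ.erase (Fin.castAdd n r), g j =
      (∏ r' ∈ univ.erase r, g (Fin.castAdd n r')) * ∏ i, g (Fin.natAdd m i) := by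
  have hne (i : Fin n) : Fin.natAdd m i ≠ Fin.castAdd n r := by simp [Fin.ext_iff]; omega
  simp [← filter_ne', prod_filter, Fin.prod_univ_add, hne]

theorem Fin.prod_erase_natAdd {M : Type*} [CommMonoid M] {m n : ℕ} (i : Fin n)
    (g : Fin (m + n) → M) :
    ∏ j ∈ univ.erase (Fin.natAdd m i), g j =
      (∏ r, g (Fin.castAdd n r)) * ∏ i' ∈ univ.erase i, g (Fin.natAdd m i') := by
  have hne (r : Fin m) : Fin.castAdd n r ≠ Fin.natAdd m i := by simp [Fin.ext_iff]; omega
  simp [← filter_ne', prod_filter, Fin.prod_univ_add, hne]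

theorem Differentiable.dense_setOf_ne_zero {f : ℂ → ℂ} (hf : Differentiable ℂ f) (hne : f ≠ 0) :
    Dense {z | f z ≠ 0} := by
  intro z
  rcases (hf.analyticAt z).eventually_eq_zero_or_eventually_ne_zero with hzero | hnz
  · refine absurd (funext fun w => ?_) hne
    exact AnalyticOnNhd.eqOn_zero_of_preconnected_of_eventuallyEq_zero (fun w _ => hf.analyticAt w)
      isPreconnected_univ (Set.mem_univ z) hzero (Set.mem_univ w)
  · exact mem_closure_iff_frequently.2 (hnz.frequently.filter_mono nhdsWithin_le_nhds)

theorem Function.Odd.pairwise_sub_ne_zero_of_lt {f : ℂ → ℂ} (hodd : f.Odd) {ι : Type*}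
    [LinearOrder ι] {A : ι → ℂ} (h : ∀ j k, j < k → f (A j - A k) ≠ 0) :
    Pairwise fun j k => f (A j - A k) ≠ 0 := by
  intro j k hjk
  rcases hjk.lt_or_gt with hlt | hgt
  · exact h j k hlt
  · rw [← neg_sub, hodd.eq, neg_ne_zero]
    exact h k j hgt

noncomputable def residueCoeff (f : ℂ → ℂ) {n m : ℕ} (A : Fin n → ℂ) (B : Fin m → ℂ)
    (k : Fin n) : ℂ :=
  (∏ j, f (A k - B j)) / ∏ j ∈ univ.erase k, f (A k - A j)

theorem residueCoeff_append_castAdd (f : ℂ → ℂ) {m n l : ℕ} (u : Fin m → ℂ) (v : Fin n → ℂ)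
    (B : Fin l → ℂ) (r : Fin m) :
    residueCoeff f (Fin.append u v) B (Fin.castAdd n r) =
      (∏ j, f (u r - B j)) / ((∏ r' ∈ univ.erase r, f (u r - u r')) * ∏ i, f (u r - v i)) := by
  simp [residueCoeff, Fin.prod_erase_castAdd]

theorem residueCoeff_append_natAdd (f : ℂ → ℂ) {m n l : ℕ} (u : Fin m → ℂ) (v : Fin n → ℂ)
    (B : Fin l → ℂ) (i : Fin n) :
    residueCoeff f (Fin.append u v) B (Fin.natAdd m i) =
      (∏ j, f (v i - B j)) / ((∏ r, f (v i - u r)) * ∏ i' ∈ univ.erase i, f (v i - v i')) := by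
  simp [residueCoeff, Fin.prod_erase_natAdd]

section PartialFractions

variable {f : ℂ → ℂ}

theorem residueCoeff_cons_cons (hR : SatisfiesRiemannRelation f) {n m : ℕ} (A : Fin n → ℂ)
    (p p' q q' : ℂ) (B : Fin m → ℂ) (k : Fin n) :
    f (q + q' - p - p') * f (p' - p) * residueCoeff f A (Fin.cons q (Fin.cons q' B)) k =
      f (q' - p) * f (q - p) * residueCoeff f A (Fin.cons p' (Fin.cons (q + q' - p') B)) k +
      f (q' - p') * f (p' - q) * residueCoeff f A (Fin.cons p (Fin.cons (q + q' - p) B)) k := by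
  simp only [residueCoeff, Fin.prod_univ_succ, Fin.cons_zero, Fin.cons_succ]
  linear_combination (∏ j, f (A k - B j)) / (∏ j ∈ univ.erase k, f (A k - A j)) *
    hR.three_term (A k) p p' q q'

theorem sum_residueCoeff_cons_self (hodd : f.Odd) {n m : ℕ} (A : Fin (n + 1) → ℂ)
    (l : Fin (n + 1)) (B : Fin m → ℂ) (hA : ∀ i, f (A (l.succAbove i) - A l) ≠ 0) :
    ∑ k, residueCoeff f A (Fin.cons (A l) B) k =
      ∑ i, residueCoeff f (fun i => A (l.succAbove i)) B i := by
  rw [Fin.sum_univ_succAbove _ l]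
  simp only [residueCoeff, Fin.prod_univ_succ, Fin.cons_zero, Fin.cons_succ, sub_self,
    hodd.map_zero, zero_mul, zero_div, zero_add, Fin.prod_erase_succAbove]
  exact sum_congr rfl fun i _ => mul_div_mul_left _ _ (hA i)

theorem sum_residueCoeff_cons_cons_eq_zero (hodd : f.Odd) (hR : SatisfiesRiemannRelation f)
    {n : ℕ} (ih : ∀ A' B' : Fin (n + 1) → ℂ, ∑ i, A' i = ∑ i, B' i →
      Pairwise (fun j k => f (A' j - A' k) ≠ 0) → ∑ k, residueCoeff f A' B' k = 0)
    (A : Fin (n + 2) → ℂ) (q q' : ℂ) (B : Fin n → ℂ) (hsum : ∑ i, A i = q + (q' + ∑ i, B i))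
    (hA : Pairwise fun j k => f (A j - A k) ≠ 0) (hK : f (q + q' - A 0 - A 1) ≠ 0) :
    ∑ k, residueCoeff f A (Fin.cons q (Fin.cons q' B)) k = 0 := by
  have hsum_succAbove (l : Fin (n + 2)) : ∑ i, A (l.succAbove i) = ∑ i, A i - A l := by
    rw [Fin.sum_univ_succAbove A l]; ring
  have hreduce (l : Fin (n + 2)) (c : ℂ) (hc : A l + c = q + q') :
      ∑ k, residueCoeff f A (Fin.cons (A l) (Fin.cons c B)) k = 0 := by
    rw [sum_residueCoeff_cons_self hodd A l _ fun i => hA (Fin.succAbove_ne l i)]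
    refine ih _ _ ?_ (hA.comp_of_injective (Fin.succAbove_right_injective))
    rw [hsum_succAbove, hsum, Fin.sum_cons]
    linear_combination -hc
  have hsplit := sum_congr rfl fun k (_ : k ∈ univ) =>
    residueCoeff_cons_cons hR A (A 0) (A 1) q q' B k
  rw [sum_add_distrib, ← mul_sum, ← mul_sum, ← mul_sum, hreduce 1 _ (by ring),
    hreduce 0 _ (by ring)] at hsplit
  simpa [hK, hA (show (1 : Fin (n + 2)) ≠ 0 from Fin.zero_lt_one.ne')] using hsplit

theorem sum_residueCoeff_eq_zero (hne : f ≠ 0) (hent : Differentiable ℂ f) (hodd : f.Odd)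
    (hR : SatisfiesRiemannRelation f) :
    ∀ {n : ℕ} (A B : Fin n → ℂ), ∑ i, A i = ∑ i, B i →
      (Pairwise fun j k => f (A j - A k) ≠ 0) → ∑ k, residueCoeff f A B k = 0
  | 0, _, _, _, _ => rfl
  | 1, A, B, hsum, _ => by
    simp_all [residueCoeff, hodd.map_zero]
  | 2, A, B, hsum, _ => by
    -- here `B 0 + B 1 = A 0 + A 1`, so the split used for larger `n` always degenerates
    simp only [Fin.sum_univ_two] at hsum
    have h01 : A 1 - A 0 = -(A 0 - A 1) := by ring
    have h10 : A 1 - B 0 = -(A 0 - B 1) := by linear_combination hsum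
    have h11 : A 1 - B 1 = -(A 0 - B 0) := by linear_combination hsum
    rw [Fin.sum_univ_two, residueCoeff, residueCoeff, show univ.erase (0 : Fin 2) = {1} by decide,
      show univ.erase (1 : Fin 2) = {0} by decide, prod_singleton, prod_singleton,
      Fin.prod_univ_two, Fin.prod_univ_two, h01, h10, h11, hodd.eq, hodd.eq, hodd.eq]
    ring
  | n + 3, A, B, hsum, hA => by
    induction B using Fin.consCases with | cons q B => ?_
    induction B using Fin.consCases with | cons q' B => ?_
    induction B using Fin.consCases with | cons r B => ?_
    set κ := q + q' - A 0 - A 1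
    let G : ℂ → ℂ := fun t =>
      ∑ k, residueCoeff f A (Fin.cons (q + (t - κ)) (Fin.cons q' (Fin.cons (r - (t - κ)) B))) k
    have hG : Continuous G := by
      have hcont := hent.continuous
      simp only [G, residueCoeff, Fin.prod_univ_succ, Fin.cons_zero, Fin.cons_succ]
      fun_prop
    have hG0 : ∀ t, f t ≠ 0 → G t = 0 := fun t ht =>
      sum_residueCoeff_cons_cons_eq_zero hodd hR (sum_residueCoeff_eq_zero hne hent hodd hR) A _ _ _
        (by simp only [Fin.sum_cons] at hsum ⊢; linear_combination hsum)
        hA (by convert ht using 2; ring)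
    simpa [G] using congrFun (hG.ext_on (hent.dense_setOf_ne_zero hne) continuous_const hG0) κ

end PartialFractions

noncomputable def baileyPoles (δ x y : ℂ) {m : ℕ} (d : Fin m → ℂ) : Fin (m + 4) → ℂ :=
  Fin.append (fun r => δ / 2 - d r) ![δ / 2 + x, y - δ / 2, -y - δ / 2, δ / 2 - x]

section Bailey

variable {f : ℂ → ℂ} {δ x y : ℂ} {m : ℕ} {d : Fin m → ℂ}

theorem sum_baileyPoles :
    ∑ i, baileyPoles δ x y d i = m * (δ / 2) - ∑ r, d r := by
  simp only [baileyPoles, Fin.sum_univ_add, Fin.append_left, Fin.append_right, Fin.sum_univ_four,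
    sum_sub_distrib, sum_const, card_univ, Fintype.card_fin, nsmul_eq_mul, Fin.isValue,
    Matrix.cons_val_zero, Matrix.cons_val_one, Matrix.cons_val]
  ring

theorem pairwise_baileyPoles (hodd : f.Odd) (hd : ∀ r r', r ≠ r' → f (d r - d r') ≠ 0)
    (hx : f (2 * x) ≠ 0) (hy : f (2 * y) ≠ 0)
    (hdx : ∀ r, f (-d r + x) ≠ 0) (hdx' : ∀ r, f (-d r - x) ≠ 0)
    (hye : ∀ r, f (y + (δ - d r)) ≠ 0) (hye' : ∀ r, f (-y + (δ - d r)) ≠ 0)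
    (hp1 : f (x + δ + y) ≠ 0) (hp2 : f (x + δ - y) ≠ 0)
    (hp3 : f (x - δ + y) ≠ 0) (hp4 : f (x - δ - y) ≠ 0) :
    Pairwise fun j k => f (baileyPoles δ x y d j - baileyPoles δ x y d k) ≠ 0 := by
  refine hodd.pairwise_sub_ne_zero_of_lt fun j k hjk => ?_
  induction j using Fin.addCases with
  | left r =>
    induction k using Fin.addCases with
    | left r' =>
      simp only [baileyPoles, Fin.append_left]
      convert hd r' r (ne_of_gt (a := r') (b := r) hjk) using 2
      ring
    | right i =>
      simp only [baileyPoles, Fin.append_left, Fin.append_right]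
      fin_cases i <;> simp only [Fin.zero_eta, Fin.mk_one, Fin.reduceFinMk, Fin.isValue,
        Matrix.cons_val_zero, Matrix.cons_val_one, Matrix.cons_val]
      · convert hdx' r using 2; ring
      · convert hye' r using 2; ring
      · convert hye r using 2; ring
      · convert hdx r using 2; ring
  | right i =>
    induction k using Fin.addCases with
    | left r' => simp [Fin.lt_def] at hjk; omega
    | right i' =>
      rw [Fin.natAdd_lt_natAdd_iff] at hjk
      simp only [baileyPoles, Fin.append_right]
      fin_cases i <;> fin_cases i' <;>
        simp only [Fin.zero_eta, Fin.mk_one, Fin.reduceFinMk, Fin.isValue, Matrix.cons_val_zero,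
          Matrix.cons_val_one, Matrix.cons_val] at hjk ⊢
      all_goals try exact absurd hjk (by decide)
      · convert hp2 using 2; ring
      · convert hp1 using 2; ring
      · convert hx using 2; ring
      · convert hy using 2; ring
      · convert hp3 using 2; ring
      · convert hp4 using 2; ring

theorem mul_residueCoeff_baileyPoles_natAdd_zero (a : Fin (m + 4) → ℂ) :
    f (x + y) * f (x - y) *
        residueCoeff f (baileyPoles δ x y d) (fun p => δ / 2 - a p) (Fin.natAdd m 0) =
      (∏ p, f (x + a p)) / (f (2 * x) * ∏ r, f (x + d r)) *
        (f (x + y) * f (x - y) / (f (x + δ + y) * f (x + δ - y))) := by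
  have hB (p) : δ / 2 + x - (δ / 2 - a p) = x + a p := by ring
  have hA (r) : δ / 2 + x - (δ / 2 - d r) = x + d r := by ring
  have h1 : δ / 2 + x - (y - δ / 2) = x + δ - y := by ring
  have h2 : δ / 2 + x - (-y - δ / 2) = x + δ + y := by ring
  have h3 : δ / 2 + x - (δ / 2 - x) = 2 * x := by ring
  rw [baileyPoles, residueCoeff_append_natAdd]
  simp only [Fin.isValue, Matrix.cons_val_zero, Matrix.cons_val_one, Matrix.cons_val,
    ← filter_ne', prod_filter, Fin.prod_univ_four, ne_eq, Fin.reduceEq, not_false_eq_true,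
    not_true_eq_false, if_true, if_false, one_mul, hB, hA, h1, h2, h3]
  ring

theorem mul_residueCoeff_baileyPoles_natAdd_one (hodd : f.Odd) (a : Fin (m + 4) → ℂ) :
    f (x + y) * f (x - y) *
        residueCoeff f (baileyPoles δ x y d) (fun p => δ / 2 - a p) (Fin.natAdd m 1) =
      (∏ p, f (-y + (δ - a p))) / (f (-(2 * y)) * ∏ r, f (-y + (δ - d r))) *
        (f (x + y) * f (x - y) / (f (x + (y - δ)) * f (x - (y - δ)))) := by
  have hB (p) : y - δ / 2 - (δ / 2 - a p) = -(-y + (δ - a p)) := by ring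
  have hA (r) : y - δ / 2 - (δ / 2 - d r) = -(-y + (δ - d r)) := by ring
  have h0 : y - δ / 2 - (δ / 2 + x) = -(x - (y - δ)) := by ring
  have h2 : y - δ / 2 - (-y - δ / 2) = 2 * y := by ring
  have h3 : y - δ / 2 - (δ / 2 - x) = x + (y - δ) := by ring
  rw [baileyPoles, residueCoeff_append_natAdd]
  simp only [Fin.isValue, Matrix.cons_val_zero, Matrix.cons_val_one, Matrix.cons_val,
    ← filter_ne', prod_filter, Fin.prod_univ_four, ne_eq, Fin.reduceEq, not_false_eq_true,
    not_true_eq_false, if_true, if_false, mul_one, hB, hA, h0, h2, h3, hodd.eq, prod_neg,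
    card_univ, Fintype.card_fin, pow_add]
  field_simp

theorem mul_residueCoeff_baileyPoles_natAdd_two (hodd : f.Odd) (a : Fin (m + 4) → ℂ) :
    f (x + y) * f (x - y) *
        residueCoeff f (baileyPoles δ x y d) (fun p => δ / 2 - a p) (Fin.natAdd m 2) =
      (∏ p, f (y + (δ - a p))) / (f (2 * y) * ∏ r, f (y + (δ - d r))) *
        (f (x + y) * f (x - y) / (f (x + (y + δ)) * f (x - (y + δ)))) := by
  have hB (p) : -y - δ / 2 - (δ / 2 - a p) = -(y + (δ - a p)) := by ring
  have hA (r) : -y - δ / 2 - (δ / 2 - d r) = -(y + (δ - d r)) := by ring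
  have h0 : -y - δ / 2 - (δ / 2 + x) = -(x + (y + δ)) := by ring
  have h1 : -y - δ / 2 - (y - δ / 2) = -(2 * y) := by ring
  have h3 : -y - δ / 2 - (δ / 2 - x) = x - (y + δ) := by ring
  rw [baileyPoles, residueCoeff_append_natAdd]
  simp only [Fin.isValue, Matrix.cons_val_zero, Matrix.cons_val_one, Matrix.cons_val,
    ← filter_ne', prod_filter, Fin.prod_univ_four, ne_eq, Fin.reduceEq, not_false_eq_true,
    not_true_eq_false, if_true, if_false, mul_one, hB, hA, h0, h1, h3, hodd.eq, prod_neg,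
    card_univ, Fintype.card_fin, pow_add]
  field_simp

theorem mul_residueCoeff_baileyPoles_natAdd_three (hodd : f.Odd) (a : Fin (m + 4) → ℂ) :
    f (x + y) * f (x - y) *
        residueCoeff f (baileyPoles δ x y d) (fun p => δ / 2 - a p) (Fin.natAdd m 3) =
      (∏ p, f (-x + a p)) / (f (-(2 * x)) * ∏ r, f (-x + d r)) *
        (f (x + y) * f (x - y) / (f (x - δ + y) * f (x - δ - y))) := by
  have hB (p) : δ / 2 - x - (δ / 2 - a p) = -x + a p := by ring
  have hA (r) : δ / 2 - x - (δ / 2 - d r) = -x + d r := by ring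
  have h0 : δ / 2 - x - (δ / 2 + x) = -(2 * x) := by ring
  have h1 : δ / 2 - x - (y - δ / 2) = -(x - δ + y) := by ring
  have h2 : δ / 2 - x - (-y - δ / 2) = -(x - δ - y) := by ring
  rw [baileyPoles, residueCoeff_append_natAdd]
  simp only [Fin.isValue, Matrix.cons_val_zero, Matrix.cons_val_one, Matrix.cons_val,
    ← filter_ne', prod_filter, Fin.prod_univ_four, ne_eq, Fin.reduceEq, not_false_eq_true,
    not_true_eq_false, if_true, if_false, mul_one, hB, hA, h0, h1, h2, hodd.eq]
  ring

theorem mul_residueCoeff_baileyPoles_castAdd (hodd : f.Odd) (a : Fin (m + 4) → ℂ) (r : Fin m) :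
    f (x + y) * f (x - y) *
        residueCoeff f (baileyPoles δ x y d) (fun p => δ / 2 - a p) (Fin.castAdd 4 r) =
      (∏ p, f (a p - d r)) / (∏ r' ∈ univ.erase r, f (d r' - d r)) *
        (f (x + y) * f (x - y) /
          ((f (-d r + x) * f (-d r - x)) * (f (-(δ - d r) + y) * f (-(δ - d r) - y)))) := by
  have hB (p) : δ / 2 - d r - (δ / 2 - a p) = a p - d r := by ring
  have hA (r') : δ / 2 - d r - (δ / 2 - d r') = d r' - d r := by ring
  have h0 : δ / 2 - d r - (δ / 2 + x) = -d r - x := by ring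
  have h1 : δ / 2 - d r - (y - δ / 2) = -(-(δ - d r) + y) := by ring
  have h2 : δ / 2 - d r - (-y - δ / 2) = -(-(δ - d r) - y) := by ring
  have h3 : δ / 2 - d r - (δ / 2 - x) = -d r + x := by ring
  rw [baileyPoles, residueCoeff_append_castAdd]
  simp only [Fin.isValue, Matrix.cons_val_zero, Matrix.cons_val_one, Matrix.cons_val,
    Fin.prod_univ_four, hB, hA, h0, h1, h2, h3, hodd.eq]
  ring

end Bailey

theorem elliptic_bailey_general_identity_general (f : ℂ → ℂ)
    (hne : f ≠ 0) (hent : Differentiable ℂ f)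
    (hodd : ∀ u : ℂ, f (-u) = -f u)
    (hR : ∀ x y u v : ℂ,
      f (x + u) * f (x - u) * (f (y + v) * f (y - v)) -
        f (x + v) * f (x - v) * (f (y + u) * f (y - u)) =
      f (x + y) * f (x - y) * (f (u + v) * f (u - v)))
    (δ : ℂ) (m : ℕ)
    (a : Fin (m + 4) → ℂ) (d : Fin m → ℂ)
    (hbal : (∑ p, a p) - ∑ r, d r = 2 * δ)
    (b : Fin (m + 4) → ℂ) (hb : ∀ p, b p = δ - a p)
    (e : Fin m → ℂ) (he : ∀ r, e r = δ - d r)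
    (hd : ∀ r r' : Fin m, r ≠ r' → f (d r - d r') ≠ 0)
    (x y : ℂ)
    (hx : f (2 * x) ≠ 0) (hy : f (2 * y) ≠ 0)
    (hye : ∀ r, f (y + e r) ≠ 0) (hye' : ∀ r, f (-y + e r) ≠ 0)
    (hdx : ∀ r, f (-d r + x) ≠ 0) (hdx' : ∀ r, f (-d r - x) ≠ 0)
    (hp1 : f (x + δ + y) ≠ 0) (hp2 : f (x + δ - y) ≠ 0)
    (hp3 : f (x - δ + y) ≠ 0) (hp4 : f (x - δ - y) ≠ 0) :
    (∏ p, f (x + a p)) / (f (2 * x) * ∏ r, f (x + d r)) *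
        (f (x + y) * f (x - y) / (f (x + δ + y) * f (x + δ - y))) +
      (∏ p, f (-x + a p)) / (f (-(2 * x)) * ∏ r, f (-x + d r)) *
        (f (x + y) * f (x - y) / (f (x - δ + y) * f (x - δ - y))) +
      (∏ p, f (y + b p)) / (f (2 * y) * ∏ r, f (y + e r)) *
        (f (x + y) * f (x - y) / (f (x + (y + δ)) * f (x - (y + δ)))) +
      (∏ p, f (-y + b p)) / (f (-(2 * y)) * ∏ r, f (-y + e r)) *
        (f (x + y) * f (x - y) / (f (x + (y - δ)) * f (x - (y - δ)))) +
      (∑ r, (∏ p, f (a p - d r)) / (∏ r' ∈ univ.erase r, f (d r' - d r)) *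
        (f (x + y) * f (x - y) /
          ((f (-d r + x) * f (-d r - x)) * (f (-e r + y) * f (-e r - y))))) = 0 := by
  obtain rfl : b = fun p => δ - a p := funext hb
  obtain rfl : e = fun r => δ - d r := funext he
  have hsum : ∑ i, baileyPoles δ x y d i = ∑ p, (δ / 2 - a p) := by
    rw [sum_baileyPoles, sum_sub_distrib, sum_const, card_univ, Fintype.card_fin, nsmul_eq_mul]
    push_cast
    linear_combination hbal
  have key := sum_residueCoeff_eq_zero hne hent hodd hR _ _ hsum
    (pairwise_baileyPoles hodd hd hx hy hdx hdx' hye hye' hp1 hp2 hp3 hp4)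
  rw [Fin.sum_univ_add, Fin.sum_univ_four] at key
  rw [← mul_residueCoeff_baileyPoles_natAdd_zero, ← mul_residueCoeff_baileyPoles_natAdd_one hodd,
    ← mul_residueCoeff_baileyPoles_natAdd_two hodd,
    ← mul_residueCoeff_baileyPoles_natAdd_three hodd,
    sum_congr rfl fun r _ => (mul_residueCoeff_baileyPoles_castAdd hodd a r).symm, ← mul_sum]
  linear_combination f (x + y) * f (x - y) * key

/-- Elliptic Bailey-type general identity (the partial fraction lemma):
the five-term sum built from parameters `a₀,…,a_{m+3}`, `d₀,…,d_{m-1}` with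
`Σ a_p - Σ d_r = 2δ`, `b_p = δ - a_p`, `e_r = δ - d_r`, vanishes. -/
theorem elliptic_bailey_general_identity (f : ℂ → ℂ)
    (hne : f ≠ 0) (hent : Differentiable ℂ f)
    (hodd : ∀ u : ℂ, f (-u) = -f u)
    (hR : ∀ x y u v : ℂ,
      f (x + u) * f (x - u) * (f (y + v) * f (y - v)) -
        f (x + v) * f (x - v) * (f (y + u) * f (y - u)) =
      f (x + y) * f (x - y) * (f (u + v) * f (u - v)))
    (δ : ℂ) (hδ : δ ≠ 0) (m : ℕ) (hm : 1 ≤ m)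
    (a : Fin (m + 4) → ℂ) (d : Fin m → ℂ)
    (hbal : (∑ p, a p) - ∑ r, d r = 2 * δ)
    (b : Fin (m + 4) → ℂ) (hb : ∀ p, b p = δ - a p)
    (e : Fin m → ℂ) (he : ∀ r, e r = δ - d r)
    (hd : ∀ r r' : Fin m, r ≠ r' → f (d r - d r') ≠ 0)
    (x y : ℂ)
    (hx : f (2 * x) ≠ 0) (hy : f (2 * y) ≠ 0)
    (hxd : ∀ r, f (x + d r) ≠ 0) (hxd' : ∀ r, f (-x + d r) ≠ 0)
    (hye : ∀ r, f (y + e r) ≠ 0) (hye' : ∀ r, f (-y + e r) ≠ 0)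
    (hdx : ∀ r, f (-d r + x) ≠ 0) (hdx' : ∀ r, f (-d r - x) ≠ 0)
    (hey : ∀ r, f (-e r + y) ≠ 0) (hey' : ∀ r, f (-e r - y) ≠ 0)
    (hp1 : f (x + δ + y) ≠ 0) (hp2 : f (x + δ - y) ≠ 0)
    (hp3 : f (x - δ + y) ≠ 0) (hp4 : f (x - δ - y) ≠ 0)
    (hp5 : f (x + (y + δ)) ≠ 0) (hp6 : f (x - (y + δ)) ≠ 0)
    (hp7 : f (x + (y - δ)) ≠ 0) (hp8 : f (x - (y - δ)) ≠ 0) :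
    (∏ p, f (x + a p)) / (f (2 * x) * ∏ r, f (x + d r)) *
        (f (x + y) * f (x - y) / (f (x + δ + y) * f (x + δ - y))) +
      (∏ p, f (-x + a p)) / (f (-(2 * x)) * ∏ r, f (-x + d r)) *
        (f (x + y) * f (x - y) / (f (x - δ + y) * f (x - δ - y))) +
      (∏ p, f (y + b p)) / (f (2 * y) * ∏ r, f (y + e r)) *
        (f (x + y) * f (x - y) / (f (x + (y + δ)) * f (x - (y + δ)))) +
      (∏ p, f (-y + b p)) / (f (-(2 * y)) * ∏ r, f (-y + e r)) *
        (f (x + y) * f (x - y) / (f (x + (y - δ)) * f (x - (y - δ)))) +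
      (∑ r, (∏ p, f (a p - d r)) / (∏ r' ∈ univ.erase r, f (d r' - d r)) *
        (f (x + y) * f (x - y) /
          ((f (-d r + x) * f (-d r - x)) * (f (-e r + y) * f (-e r - y))))) = 0 :=
  elliptic_bailey_general_identity_general f hne hent hodd hR δ m a d hbal b hb e he hd x y hx hy
    hye hye' hdx hdx' hp1 hp2 hp3 hp4
end
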